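/- With x₀ = a, x₁ = b positive integers with a > b, and x_n defined as the remainder of x_{n−2} modulo x_{n−1}, if |a/b − φ| < |F_{k+2}/F_{k+1} − φ| then for all 1 ≤ n ≤ k one has x_n = (−1)ⁿ·a·F_{n−1} + (−1)^{n+1}·b·F_n. -/

import Mathlib

/-!
Put `y 0 = a`, `y 1 = b`, `y (n + 2) = y n - y (n + 1)`, so that
`y (j + 1) = (-1)^(j+1) (a F_j - b F_{j+1})`. The Euclidean algorithm follows `y` for as
long as every quotient is `1`, which holds as long as `y` stays positive. Since
`F_{j+1} - φ F_j = ψ^j` with `ψ = -1/φ`, one gets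
`y (j + 1) = b (|ψ|^j - (-1)^j (a/b - φ) F_j)`, and the hypothesis, whose right-hand side is
`|ψ|^(k+1) / F_{k+1}`, gives `|a/b - φ| F_j < |ψ|^j` for all `j ≤ k + 1`.
-/

def subtractiveSeq (a b : ℤ) : ℕ → ℤ
  | 0 => a
  | 1 => b
  | n + 2 => subtractiveSeq a b n - subtractiveSeq a b (n + 1)

lemma subtractiveSeq_succ (a b : ℤ) (n : ℕ) :
    subtractiveSeq a b (n + 1) = (-1) ^ (n + 1) * (a * Nat.fib n - b * Nat.fib (n + 1)) := by
  induction n using Nat.twoStepInduction with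
  | zero => simp [subtractiveSeq]
  | one => simp [subtractiveSeq]
  | more n ih₀ ih₁ =>
    rw [subtractiveSeq, ih₀, ih₁]
    simp only [Nat.fib_add_two, Nat.cast_add]
    ring

lemma natCast_eq_of_mod_recurrence {x : ℕ → ℕ} {y : ℕ → ℤ} {N : ℕ}
    (hx : ∀ n, x (n + 2) = x n % x (n + 1)) (hy : ∀ n, y (n + 2) = y n - y (n + 1))
    (h0 : x 0 = y 0) (h1 : x 1 = y 1) (hpos : ∀ n ≤ N, 0 < y (n + 1)) :
    ∀ n ≤ N, (x n : ℤ) = y n := by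
  intro n
  induction n using Nat.twoStepInduction with
  | zero => exact fun _ => h0
  | one => exact fun _ => h1
  | more n ih₀ ih₁ =>
    intro hn
    have hlt : y (n + 2) < y (n + 1) := by
      linarith [hy (n + 1) ▸ hpos (n + 2) hn]
    rw [hx, Int.natCast_mod, ih₀ (by omega), ih₁ (by omega), Int.emod_eq_sub_self_emod, ← hy,
      Int.emod_eq_of_lt (hpos (n + 1) (by omega)).le hlt]

open Real goldenRatio

lemma abs_goldenConj_lt_one : |ψ| < 1 :=
  abs_lt.mpr ⟨neg_one_lt_goldenConj, goldenConj_neg.trans one_pos⟩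

lemma abs_fib_succ_div_fib_sub_goldenRatio (n : ℕ) :
    |(Nat.fib (n + 2) : ℝ) / Nat.fib (n + 1) - φ| = |ψ| ^ (n + 1) / Nat.fib (n + 1) := by
  have hfib : (0 : ℝ) < Nat.fib (n + 1) := by exact_mod_cast Nat.fib_pos.mpr n.succ_pos
  have hdiff : (Nat.fib (n + 2) : ℝ) / Nat.fib (n + 1) - φ = ψ ^ (n + 1) / Nat.fib (n + 1) := by
    rw [← fib_succ_sub_goldenRatio_mul_fib, sub_div, mul_div_cancel_right₀ _ hfib.ne']
  rw [hdiff, abs_div, abs_pow, abs_of_pos hfib]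

lemma abs_mul_fib_lt_abs_goldenConj_pow {δ : ℝ} {j k : ℕ} (hjk : j ≤ k + 1)
    (h : |δ| < |(Nat.fib (k + 2) : ℝ) / Nat.fib (k + 1) - φ|) :
    |δ| * Nat.fib j < |ψ| ^ j := by
  have hfib : (0 : ℝ) < Nat.fib (k + 1) := by exact_mod_cast Nat.fib_pos.mpr k.succ_pos
  rw [abs_fib_succ_div_fib_sub_goldenRatio, lt_div_iff₀ hfib] at h
  calc |δ| * Nat.fib j ≤ |δ| * Nat.fib (k + 1) := by gcongr
    _ < |ψ| ^ (k + 1) := h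
    _ ≤ |ψ| ^ j := pow_le_pow_of_le_one (abs_nonneg ψ) abs_goldenConj_lt_one.le hjk

lemma neg_one_pow_mul_fib_sub_pos {a b : ℝ} (hb : 0 < b) {j k : ℕ} (hjk : j ≤ k + 1)
    (h : |a / b - φ| < |(Nat.fib (k + 2) : ℝ) / Nat.fib (k + 1) - φ|) :
    0 < (-1) ^ (j + 1) * (a * Nat.fib j - b * Nat.fib (j + 1)) := by
  set δ := a / b - φ
  have ha : a = b * (δ + φ) := by simp only [δ]; field_simp; ring
  have hψ : ψ ^ j = (-1) ^ j * |ψ| ^ j := by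
    rw [abs_of_neg goldenConj_neg, ← mul_pow, neg_one_mul, neg_neg]
  have hsign : ((-1 : ℝ) ^ j) ^ 2 = 1 := by rw [← pow_mul, mul_comm, pow_mul]; norm_num
  have hexpand : (-1) ^ (j + 1) * (a * Nat.fib j - b * Nat.fib (j + 1)) =
      b * (|ψ| ^ j - (-1) ^ j * δ * Nat.fib j) := by
    rw [ha]
    linear_combination (-(-1) ^ (j + 1) * b) * fib_succ_sub_goldenRatio_mul_fib j +
      ((-1) ^ j * b) * hψ + (b * |ψ| ^ j) * hsign
  have hlt : (-1) ^ j * δ * Nat.fib j < |ψ| ^ j := by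
    calc (-1) ^ j * δ * Nat.fib j ≤ |(-1) ^ j * δ * Nat.fib j| := le_abs_self _
      _ = |δ| * Nat.fib j := by simp [abs_mul]
      _ < |ψ| ^ j := abs_mul_fib_lt_abs_goldenConj_pow hjk h
  rw [hexpand]
  exact mul_pos hb (sub_pos.mpr hlt)

theorem stmt6 (a b k : ℕ) (hb : 0 < b) (x : ℕ → ℕ)
    (hx0 : x 0 = a) (hx1 : x 1 = b) (hx : ∀ n, x (n + 2) = x n % x (n + 1))
    (h : |(a : ℝ) / (b : ℝ) - (1 + Real.sqrt 5) / 2| <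
      |(Nat.fib (k + 2) : ℝ) / (Nat.fib (k + 1) : ℝ) - (1 + Real.sqrt 5) / 2|) :
    ∀ n, 1 ≤ n → n ≤ k →
      (x n : ℤ) = (-1) ^ n * (a : ℤ) * (Nat.fib (n - 1) : ℤ) +
        (-1) ^ (n + 1) * (b : ℤ) * (Nat.fib n : ℤ) := by
  have hpos : ∀ n ≤ k, 0 < subtractiveSeq a b (n + 1) := fun n hn => by
    rw [subtractiveSeq_succ]
    exact_mod_cast neg_one_pow_mul_fib_sub_pos (Nat.cast_pos.mpr hb) (Nat.le_succ_of_le hn) h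
  have hxy := natCast_eq_of_mod_recurrence hx (fun _ => rfl) (by simp [hx0, subtractiveSeq])
    (by simp [hx1, subtractiveSeq]) hpos
  intro n hn hnk
  obtain ⟨m, rfl⟩ := Nat.exists_eq_add_of_le' hn
  rw [hxy _ hnk, subtractiveSeq_succ, Nat.add_sub_cancel]
  ring
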